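/- arXiv:2212.07324 — 5 statements merged into one kernel-verified Lean document; each statement's English description precedes it below -/
import Mathlib

section
/- Suppose $S \subseteq \{\alpha < \omega_2 : \mathrm{cf}(\alpha) = \omega_1\}$ is stationary in $\omega_2$ and $\mathrm{Unif}^c_{S,2}$ holds. Then the Continuum Hypothesis holds, i.e., $2^{\aleph_0} = \aleph_1$. -/
noncomputable section

universe u

open Cardinal

/-- The first uncountable ordinal. -/
def omega1 : Ordinal := (aleph 1).ord

/-- The second uncountable ordinal. -/
def omega2 : Ordinal := (aleph 2).ord

/-- The order type of a set of ordinals: the unique ordinal `o` such that `A` is the image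
of `Iio o` under a strictly monotone map (with junk value if no such `o` exists). -/
def OT (A : Set Ordinal.{u}) : Ordinal.{u} :=
  sInf {o : Ordinal.{u} | ∃ g : Ordinal.{u} → Ordinal.{u},
    StrictMonoOn g (Set.Iio o) ∧ g '' Set.Iio o = A}

/-- `C` is a club (closed and unbounded) subset of `κ`: all of its members are `< κ`, it is
unbounded in `κ`, and it contains the supremum of each of its nonempty subsets bounded in `κ`. -/
def IsClubIn (C : Set Ordinal) (κ : Ordinal) : Prop :=
  (∀ x ∈ C, x < κ) ∧ (∀ α < κ, ∃ β ∈ C, α < β) ∧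
  (∀ S : Set Ordinal, S ⊆ C → S.Nonempty → sSup S < κ → sSup S ∈ C)

/-- `S` is a stationary subset of `κ`: it meets every club of `κ`. -/
def IsStationaryIn (S : Set Ordinal) (κ : Ordinal) : Prop :=
  (∀ x ∈ S, x < κ) ∧ ∀ C, IsClubIn C κ → (S ∩ C).Nonempty

/-- `Unif^c_{S,X}`: for every (constant-colouring assignment) `F : S → X` there is
`H : sup S → X` uniformizing `F` modulo clubs: for every `α ∈ S` the set
`{ξ < α : H ξ = F α}` contains a club of `α`. -/
def UnifC (S : Set Ordinal) (X : Type) : Prop :=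
  ∀ F : Ordinal → X, ∃ H : Ordinal → X,
    ∀ α ∈ S, ∃ C, IsClubIn C α ∧ ∀ ξ ∈ C, H ξ = F α

/-!
Assume `2^ℵ₀ ≥ ℵ₂`, so the ordinals below `ω₂` can be coded injectively by reals `G ξ : ℕ → 2`.
Uniformizing each coordinate `ξ ↦ G ξ n` gives functions `Hₙ` and, for `δ ∈ S`, clubs of `δ` on
which `Hₙ` is constantly `G δ n`. As `cf δ > ω`, these countably many clubs share a point `s δ < δ`,
and `G δ = (n ↦ Hₙ (s δ))`. Hence `s` is regressive and injective on the stationary set `S`, which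
is impossible: the ordinals `α < ω₂` with `s δ < α → δ < α` for all `δ ∈ S` form a club (injectivity
keeps each `{δ ∈ S | s δ < α}` of size `< ℵ₂`), and a point `δ ∈ S` of that club has `δ < δ`.
-/

universe v

open Ordinal Set

theorem exists_common_mem_of_isClubIn {δ : Ordinal.{u}} (hδ : ℵ₀ < δ.cof)
    {C : ℕ → Set Ordinal.{u}} (hC : ∀ n, IsClubIn (C n) δ) : ∃ s < δ, ∀ n, s ∈ C n := by
  let next (n : ℕ) (x : Ordinal.{u}) : Ordinal.{u} := sInf {β | β ∈ C n ∧ x < β}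
  have next_spec : ∀ n, ∀ x < δ, next n x ∈ C n ∧ x < next n x := fun n x hx =>
    csInf_mem (s := {β | β ∈ C n ∧ x < β}) ((hC n).2.1 x hx)
  let g (x : Ordinal.{u}) : Ordinal.{u} := ⨆ n, next n x
  have le_g : ∀ n x, next n x ≤ g x := fun n x => le_ciSup Ordinal.bddAbove_of_small n
  have g_lt : ∀ x < δ, g x < δ := fun x hx =>
    lift_iSup_lt_of_lt_cof (by simpa using hδ) fun n => (hC n).1 _ (next_spec n x hx).1
  have hδ0 : 0 < δ := pos_iff_ne_zero.2 (by rintro rfl; simp at hδ)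
  -- `nfp g 0` is the supremum of the iterates `g^[k] 0`, and `C n` has a point between any two
  -- consecutive ones.
  have hs : nfp g 0 < δ := nfp_lt_ord hδ g_lt hδ0
  refine ⟨nfp g 0, hs, fun n => ?_⟩
  have iter_lt : ∀ k, g^[k] 0 < δ := fun k => (iterate_le_nfp g 0 k).trans_lt hs
  have hsup : ⨆ k, next n (g^[k] 0) = nfp g 0 := by
    refine le_antisymm (ciSup_le fun k => ?_) (nfp_le fun k => ?_)
    · calc next n (g^[k] 0) ≤ g (g^[k] 0) := le_g n _
        _ = g^[k + 1] 0 := (Function.iterate_succ_apply' g k 0).symm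
        _ ≤ nfp g 0 := iterate_le_nfp g 0 (k + 1)
    · exact (next_spec n _ (iter_lt k)).2.le.trans (le_ciSup Ordinal.bddAbove_of_small k)
  rw [← hsup]
  exact (hC n).2.2 _ (range_subset_iff.2 fun k => (next_spec n _ (iter_lt k)).1)
    (range_nonempty _) (hsup.trans_lt hs)

theorem isClubIn_closurePoints {c : Cardinal.{u}} (hc : c.IsRegular) (hc₀ : ℵ₀ < c)
    {S : Set Ordinal.{u}} (hS : ∀ δ ∈ S, δ < c.ord) {f : Ordinal.{u} → Ordinal.{u}}
    (hf : InjOn f S) : IsClubIn {α | α < c.ord ∧ ∀ δ ∈ S, f δ < α → δ < α} c.ord := by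
  let B (y : Ordinal.{u}) : Ordinal.{u} := sSup ((· + 1) '' {δ | δ ∈ S ∧ f δ < y})
  have lt_B : ∀ y, ∀ δ ∈ S, f δ < y → δ < B y := fun y δ hδ hfδ =>
    (Order.lt_add_one_iff.2 le_rfl).trans_le <| le_csSup
      ⟨c.ord, forall_mem_image.2 fun δ hδ => Order.add_one_le_iff.2 (hS δ hδ.1)⟩
      (mem_image_of_mem _ ⟨hδ, hfδ⟩)
  have B_lt : ∀ y < c.ord, B y < c.ord := by
    intro y hy
    refine sSup_add_one_lt_of_lt_cof ?_ fun δ hδ => hS δ hδ.1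
    have hinj : Function.Injective fun δ : {δ | δ ∈ S ∧ f δ < y} => (⟨f δ, δ.2.2⟩ : Iio y) :=
      fun δ δ' h => Subtype.ext (hf δ.2.1 δ'.2.1 (congrArg Subtype.val h))
    calc #{δ | δ ∈ S ∧ f δ < y} ≤ #(Iio y) := Cardinal.mk_le_of_injective hinj
      _ = Cardinal.lift y.card := Cardinal.mk_Iio_ordinal y
      _ < Cardinal.lift c := Cardinal.lift_lt.2 (Cardinal.lt_ord.1 hy)
      _ = (Ordinal.lift c.ord).cof := by rw [← lift_cof, hc.cof_ord]
  have hcof : ℵ₀ < c.ord.cof := by rwa [hc.cof_ord]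
  refine ⟨fun α hα => hα.1, fun x hx => ?_, fun T hT hTne hTlt => ⟨hTlt, fun δ hδ hfδ => ?_⟩⟩
  · have hx1 : x + 1 < c.ord := (Cardinal.isSuccLimit_ord hc₀.le).add_one_lt hx
    refine ⟨nfp B (x + 1), ⟨nfp_lt_ord hcof B_lt hx1, fun δ hδ hfδ => ?_⟩,
      (Order.lt_add_one_iff.2 le_rfl).trans_le (le_nfp B _)⟩
    obtain ⟨k, hk⟩ := lt_nfp_iff.1 hfδ
    calc δ < B (B^[k] (x + 1)) := lt_B _ δ hδ hk
      _ = B^[k + 1] (x + 1) := (Function.iterate_succ_apply' B k _).symm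
      _ ≤ nfp B (x + 1) := iterate_le_nfp B _ _
  · have hTbdd : BddAbove T := ⟨c.ord, fun t ht => (hT ht).1.le⟩
    obtain ⟨t, ht, hft⟩ := (lt_csSup_iff hTbdd hTne).1 hfδ
    exact ((hT ht).2 δ hδ hft).trans_le (le_csSup hTbdd ht)

theorem not_injOn_of_isStationaryIn {c : Cardinal.{u}} (hc : c.IsRegular) (hc₀ : ℵ₀ < c)
    {S : Set Ordinal.{u}} (hstat : IsStationaryIn S c.ord) {f : Ordinal.{u} → Ordinal.{u}}
    (hreg : ∀ δ ∈ S, f δ < δ) : ¬ InjOn f S := fun hf => by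
  obtain ⟨δ, hδS, -, hδ⟩ := hstat.2 _ (isClubIn_closurePoints hc hc₀ hstat.1 hf)
  exact (hδ δ hδS (hreg δ hδS)).false

theorem UnifC.exists_regressive_decoding {S : Set Ordinal.{u}} {X : Type} (h : UnifC S X)
    (hS : ∀ δ ∈ S, ℵ₀ < δ.cof) (G : Ordinal.{u} → ℕ → X) :
    ∃ H : Ordinal.{u} → ℕ → X, ∀ δ ∈ S, ∃ ξ < δ, H ξ = G δ := by
  choose H hH using fun n => h fun ξ => G ξ n
  refine ⟨fun ξ n => H n ξ, fun δ hδ => ?_⟩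
  choose C hC hCH using fun n => hH n δ hδ
  obtain ⟨ξ, hξ, hξC⟩ := exists_common_mem_of_isClubIn (hS δ hδ) hC
  exact ⟨ξ, hξ, funext fun n => hCH n ξ (hξC n)⟩

theorem exists_injOn_Iio_of_lift_card_le {o : Ordinal.{u}} {α : Type v} [Nonempty α]
    (h : Cardinal.lift.{v} o.card ≤ Cardinal.lift.{u} #α) :
    ∃ G : Ordinal.{u} → α, InjOn G (Iio o) := by
  obtain ⟨e⟩ : Nonempty (Iio o ↪ α) := by
    rw [← Cardinal.lift_mk_le'.{u + 1, v}, Cardinal.mk_Iio_ordinal]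
    simpa using Cardinal.lift_le.{u + 1}.2 h
  classical
  refine ⟨fun ξ => if hξ : ξ < o then e ⟨ξ, hξ⟩ else Classical.arbitrary α,
    fun ξ hξ ξ' hξ' hG => ?_⟩
  simp only [dif_pos (mem_Iio.1 hξ), dif_pos (mem_Iio.1 hξ')] at hG
  exact congrArg Subtype.val (e.injective hG)

theorem exists_injOn_Iio_omega2 (h : ℵ_ 2 ≤ Cardinal.continuum.{v}) :
    ∃ G : Ordinal.{u} → ℕ → Fin 2, InjOn G (Iio omega2) := by
  have h' : (ℵ_ 2 : Cardinal.{u}) ≤ 𝔠 :=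
    (Cardinal.lift_le.{v}).1 (by simpa using (Cardinal.lift_le.{u}).2 h)
  exact exists_injOn_Iio_of_lift_card_le (by simpa [omega2] using h')

/-- Theorem 2.3 (Shelah): if `S ⊆ {α < ω₂ : cf α = ω₁}` is stationary in `ω₂` and
`Unif^c_{S,2}` holds, then CH holds. -/
theorem stmt5 (S : Set Ordinal)
    (hScof : ∀ α ∈ S, α < omega2 ∧ α.cof = aleph 1)
    (hstat : IsStationaryIn S omega2)
    (hunif : UnifC S (Fin 2)) :
    Cardinal.continuum = aleph 1 := by
  by_contra hCH
  have hℵ₂ : ℵ_ 2 ≤ 𝔠 := by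
    rw [← one_add_one_eq_two, ← Cardinal.succ_aleph]
    exact Order.succ_le_of_lt (Cardinal.aleph_one_le_continuum.lt_of_ne' hCH)
  obtain ⟨G, hG⟩ := exists_injOn_Iio_omega2 hℵ₂
  obtain ⟨H, hH⟩ := hunif.exists_regressive_decoding
    (fun δ hδ => (hScof δ hδ).2 ▸ Cardinal.aleph0_lt_aleph_one) G
  choose! s hs hHs using hH
  have hℵ₂reg : (ℵ_ 2 : Cardinal).IsRegular := by
    simpa [one_add_one_eq_two] using Cardinal.isRegular_aleph_add_one 1
  refine not_injOn_of_isStationaryIn hℵ₂reg (by simp) hstat hs fun δ hδ δ' hδ' hsδ => ?_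
  exact hG (hScof δ hδ).1 (hScof δ' hδ').1 (by rw [← hHs δ hδ, ← hHs δ' hδ', hsδ])
end
end

section
/- Suppose $(A_\alpha : \alpha \in S)$ is a $\diamondsuit(S)$-sequence for a stationary set $S \subseteq \{\alpha < \omega_2 : \mathrm{cf}(\alpha) = \omega_1\}$. Then $\mathrm{Unif}^c_{S,2}$ fails: there is a function $F : S \to 2$ such that no function $H : \omega_2 \to 2$ uniformizes $F$ modulo clubs. -/
noncomputable section

universe u

open Cardinal

/-!
Let `F α` be `1` exactly when the guess `A α` misses a club of `α`. Given `H`, the diamond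
sequence guesses `{ξ | H ξ = 1}` correctly at some `α ∈ S`. If `F α = 0`, the club on which
`H = F α` misses `A α`, contradicting the definition of `F`; if `F α = 1`, the club on which
`H = 1` (so which lies inside `A α`) must meet the club missing `A α`, because two clubs of an
ordinal of uncountable cofinality intersect.
-/

theorem Ordinal.iSup_eq_iSup_of_interleave {c d : ℕ → Ordinal.{u}} (hcd : ∀ n, c n ≤ d n)
    (hdc : ∀ n, d n ≤ c (n + 1)) : ⨆ n, c n = ⨆ n, d n :=
  le_antisymm (Ordinal.iSup_le fun n => (hcd n).trans (Ordinal.le_iSup d n))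
    (Ordinal.iSup_le fun n => (hdc n).trans (Ordinal.le_iSup c (n + 1)))

theorem isClubIn_Iio {α : Ordinal} (hα : Order.IsSuccLimit α) : IsClubIn (Set.Iio α) α :=
  ⟨fun _ hx => hx, fun _ hx => ⟨Order.succ _, hα.succ_lt hx, Order.lt_succ _⟩,
    fun _ _ _ h => h⟩

namespace IsClubIn

variable {C D : Set Ordinal.{u}} {α : Ordinal.{u}}

theorem exists_next (hC : IsClubIn C α) : ∃ next : Ordinal.{u} → Ordinal.{u},
    ∀ x < α, next x ∈ C ∧ x < next x := by
  have : ∀ x, ∃ y, x < α → y ∈ C ∧ x < y := fun x => by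
    by_cases hx : x < α
    · obtain ⟨y, hy⟩ := hC.2.1 x hx
      exact ⟨y, fun _ => hy⟩
    · exact ⟨0, fun h => absurd h hx⟩
  choose next hnext using this
  exact ⟨next, hnext⟩

theorem iSup_mem (hC : IsClubIn C α) (hα : ℵ₀ < α.cof) {c : ℕ → Ordinal.{u}}
    (hc : ∀ n, c n ∈ C) : ⨆ n, c n ∈ C :=
  hC.2.2 _ (Set.range_subset_iff.2 hc) (Set.range_nonempty c)
    (Ordinal.lift_iSup_lt_of_lt_cof (by simpa using hα) fun n => hC.1 _ (hc n))

/-- The supremum of a sequence alternating between `C` and `D` lies in both. -/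
theorem inter_nonempty (hC : IsClubIn C α) (hD : IsClubIn D α) (hα : ℵ₀ < α.cof) :
    (C ∩ D).Nonempty := by
  obtain ⟨f, hf⟩ := hC.exists_next
  obtain ⟨g, hg⟩ := hD.exists_next
  have hα0 : 0 < α := pos_iff_ne_zero.2 (by rintro rfl; simp at hα)
  let e : ℕ → Ordinal.{u} := fun n => (g ∘ f)^[n] 0
  have he_succ (n : ℕ) : e (n + 1) = g (f (e n)) := Function.iterate_succ_apply' _ _ _
  have he (n : ℕ) : e n < α := by
    induction n with
    | zero => exact hα0
    | succ n ih => rw [he_succ]; exact hD.1 _ (hg _ (hC.1 _ (hf _ ih).1)).1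
  have hfC (n : ℕ) : f (e n) ∈ C := (hf _ (he n)).1
  have hgD (n : ℕ) : g (f (e n)) ∈ D := (hg _ (hC.1 _ (hfC n))).1
  have hsup : ⨆ n, f (e n) = ⨆ n, g (f (e n)) :=
    Ordinal.iSup_eq_iSup_of_interleave (fun n => (hg _ (hC.1 _ (hfC n))).2.le)
      (fun n => he_succ n ▸ (hf _ (he (n + 1))).2.le)
  exact ⟨_, hC.iSup_mem hα hfC, hsup ▸ hD.iSup_mem hα hgD⟩

end IsClubIn

theorem IsStationaryIn.nonempty {S : Set Ordinal} {κ : Ordinal} (hS : IsStationaryIn S κ)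
    (hκ : Order.IsSuccLimit κ) : (S ∩ Set.Iio κ).Nonempty :=
  hS.2 _ (isClubIn_Iio hκ)

/-- The paper's `F(α) = 1 - i` when `A_α = X` codes a function equal to `i` on a club of `α`;
`0` when it is constant on no club. -/
def diagonalColour (X : Set Ordinal) (α : Ordinal) : Fin 2 :=
  open Classical in if ∃ C, IsClubIn C α ∧ ∀ ξ ∈ C, ξ ∉ X then 1 else 0

theorem not_exists_club_eq_diagonalColour {X : Set Ordinal} {α : Ordinal} (hα : ℵ₀ < α.cof)
    {H : Ordinal → Fin 2} (hX : ∀ ξ < α, ξ ∈ X ↔ H ξ = 1) :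
    ¬ ∃ C, IsClubIn C α ∧ ∀ ξ ∈ C, H ξ = diagonalColour X α := by
  rintro ⟨C, hC, hHC⟩
  by_cases hmiss : ∃ C', IsClubIn C' α ∧ ∀ ξ ∈ C', ξ ∉ X
  · obtain ⟨C', hC', hC'X⟩ := hmiss
    obtain ⟨ξ, hξC, hξC'⟩ := hC.inter_nonempty hC' hα
    have hHξ : H ξ = 1 := by
      rw [hHC ξ hξC, diagonalColour, if_pos ⟨C', hC', hC'X⟩]
    exact hC'X ξ hξC' ((hX ξ (hC.1 ξ hξC)).2 hHξ)
  · refine hmiss ⟨C, hC, fun ξ hξ hξX => ?_⟩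
    have hHξ := (hX ξ (hC.1 ξ hξ)).1 hξX
    rw [hHC ξ hξ, diagonalColour, if_neg hmiss] at hHξ
    exact zero_ne_one hHξ

theorem stmt9_general (S : Set Ordinal)
    (hScof : ∀ α ∈ S, α < omega2 ∧ α.cof = aleph 1)
    (A : Ordinal → Set Ordinal)
    (hguess : ∀ B ⊆ Set.Iio omega2,
      IsStationaryIn {α | α ∈ S ∧ B ∩ Set.Iio α = A α} omega2) :
    ∃ F : Ordinal → Fin 2,
      ¬ ∃ H : Ordinal → Fin 2, ∀ α ∈ S, ∃ C, IsClubIn C α ∧ ∀ ξ ∈ C, H ξ = F α := by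
  refine ⟨fun α => diagonalColour (A α) α, ?_⟩
  rintro ⟨H, hH⟩
  let B : Set Ordinal := {ξ | ξ < omega2 ∧ H ξ = 1}
  obtain ⟨α, ⟨hαS, hAB⟩, hαω₂⟩ := (hguess B fun _ hξ => hξ.1).nonempty
    (Cardinal.isSuccLimit_ord (Cardinal.aleph0_le_aleph 2))
  have hαcof : ℵ₀ < α.cof := (hScof α hαS).2 ▸ Cardinal.aleph0_lt_aleph_one
  have hAα (ξ : Ordinal) (hξ : ξ < α) : ξ ∈ A α ↔ H ξ = 1 := by
    rw [← hAB]
    exact ⟨fun h => h.1.2, fun h => ⟨⟨hξ.trans hαω₂, h⟩, hξ⟩⟩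
  exact not_exists_club_eq_diagonalColour hαcof hAα (hH α hαS)

/-- If `(A_α : α ∈ S)` is a `◇(S)`-sequence on a stationary `S ⊆ {α < ω₂ : cf α = ω₁}`,
then `Unif^c_{S,2}` fails: there is `F : S → 2` such that no `H : ω₂ → 2` uniformizes `F`
modulo clubs. -/
theorem stmt9 (S : Set Ordinal)
    (hScof : ∀ α ∈ S, α < omega2 ∧ α.cof = aleph 1)
    (hstat : IsStationaryIn S omega2)
    (A : Ordinal → Set Ordinal) (hA : ∀ α ∈ S, A α ⊆ Set.Iio α)
    (hguess : ∀ B ⊆ Set.Iio omega2,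
      IsStationaryIn {α | α ∈ S ∧ B ∩ Set.Iio α = A α} omega2) :
    ∃ F : Ordinal → Fin 2,
      ¬ ∃ H : Ordinal → Fin 2, ∀ α ∈ S, ∃ C, IsClubIn C α ∧ ∀ ξ ∈ C, H ξ = F α :=
  stmt9_general S hScof A hguess
end
end

section
/- Let $f : \omega_1 \to \omega_1$ be a function such that for every nonzero $\alpha < \omega_2$ and every canonical function $g$ for $\alpha$, the set $\{\nu < \omega_1 : g(\nu) < f(\nu)\}$ contains a club. Let $\mathcal{K}^f$ be the collection of countable elementary submodels $N$ of $(H(\omega_2); \in, \vec e, f)$ such that $\mathrm{ot}(N \cap \omega_2) < f(\delta_N)$. Then $\mathcal{K}^f$ is projective stationary: for every function $F : [\omega_2]^{<\omega} \to \omega_2$ and every stationary $S \subseteq \omega_1$ there is a countable $X \subseteq \omega_2$ closed under $F$ such that $\delta := X \cap \omega_1 \in S$ and $f(\delta) > \mathrm{ot}(X)$. -/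
noncomputable section

universe u

open Cardinal

/-!
Let `Y ν` be the closure of `ν` under `F` and `X = Y ω₁`. Then `|X| = ℵ₁`, so `α = ot X < ω₂`.
Concatenating enumerations in type `ω` of the countable sets `Y μ` along `ω₁` (position
`ω·μ + n` holds the `n`-th element of `Y μ`) and collapsing `X` onto `α` gives a surjection
`π : ω₁ → α` such that `π '' ν` is the collapse of `Y ν`, hence `ot (π '' ν) = ot (Y ν)`, for every
limit `ν` closed under `μ ↦ ω·(μ+1)`. Such `ν` with `Y ν ∩ ω₁ = ν` contain a club, the hypothesis on
`f` gives a club of `ν` with `ot (π '' ν) < f ν`, and any `ν ∈ S` in both yields `X := Y ν`.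
-/

open Ordinal Set Order

section RegularCardinal

variable {c : Cardinal.{u}}

theorem sSup_lt_ord_of_isRegular (hc : c.IsRegular) {s : Set Ordinal.{u}}
    (hs : #s < Cardinal.lift.{u + 1} c) (h : ∀ x ∈ s, x < c.ord) : sSup s < c.ord :=
  sSup_lt_of_lt_cof (by rwa [lift_ord, hc.lift.cof_ord]) h

theorem Set.Countable.sSup_lt_ord (hc : c.IsRegular) (hc₀ : ℵ₀ < c) {s : Set Ordinal.{u}}
    (hs : s.Countable) (h : ∀ x ∈ s, x < c.ord) : sSup s < c.ord :=
  sSup_lt_ord_of_isRegular hc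
    ((mk_le_aleph0_iff.2 hs.to_subtype).trans_lt (aleph0_lt_lift.2 hc₀)) h

theorem iSup_nat_lt_ord (hc : c.IsRegular) (hc₀ : ℵ₀ < c) {x : ℕ → Ordinal.{u}}
    (h : ∀ n, x n < c.ord) : ⨆ n, x n < c.ord :=
  (countable_range x).sSup_lt_ord hc hc₀ (forall_mem_range.2 h)

theorem omega0_mul_lt_ord (hc₀ : ℵ₀ < c) {x : Ordinal.{u}} (hx : x < c.ord) :
    ω * x < c.ord :=
  isPrincipal_mul_ord hc₀.le (lt_ord.2 (by rwa [card_omega0])) hx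

end RegularCardinal

theorem isRegular_aleph_two : (aleph 2 : Cardinal.{u}).IsRegular := by
  simpa [one_add_one_eq_two] using isRegular_aleph_add_one (1 : Ordinal.{u})

theorem omega1_lt_omega2 : omega1.{u} < omega2 :=
  ord_lt_ord.2 (aleph_lt_aleph.2 one_lt_two)

theorem countable_Iio_of_lt_omega1 {μ : Ordinal.{u}} (hμ : μ < omega1) : (Iio μ).Countable := by
  rw [← le_aleph0_iff_set_countable, Cardinal.mk_Iio_ordinal, ← lift_aleph0.{u + 1, u},
    Cardinal.lift_le, ← lt_aleph_one_iff]
  exact lt_ord.1 hμ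

section OrderType

theorem StrictMonoOn.invFunOn {α β : Type*} [LinearOrder α] [Preorder β] [Nonempty α]
    {f : α → β} {s : Set α} (hf : StrictMonoOn f s) :
    StrictMonoOn (Function.invFunOn f s) (f '' s) := by
  have hinv := hf.injOn.leftInvOn_invFunOn
  rintro _ ⟨a, ha, rfl⟩ _ ⟨b, hb, rfl⟩ hab
  rw [hinv ha, hinv hb]
  exact (hf.lt_iff_lt ha hb).1 hab

theorem le_apply_of_strictMonoOn_Iio {g : Ordinal.{u} → Ordinal.{u}} {o : Ordinal.{u}}
    (hg : StrictMonoOn g (Iio o)) {x : Ordinal.{u}} (hx : x < o) : x ≤ g x := by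
  induction x using WellFoundedLT.induction with
  | _ x ih =>
    by_contra! hgx
    have hgo : g x < o := hgx.trans hx
    exact (ih (g x) hgx hgo).not_gt (hg hgo hx hgx)

variable {A : Set Ordinal.{u}} {β : Ordinal.{u}}

/-- Enumerate `A ∪ [β, ∞)`, which is unbounded, and stop at the index of `β`. -/
theorem exists_strictMonoOn_Iio_image_eq (hA : A ⊆ Iio β) :
    ∃ o, ∃ g : Ordinal.{u} → Ordinal.{u}, StrictMonoOn g (Iio o) ∧ g '' Iio o = A := by
  set s := A ∪ Ici β
  have hs : ¬BddAbove s := fun ⟨b, hb⟩ =>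
    (lt_add_one (max β b)).not_ge (hb (Or.inr (le_max_left β b |>.trans le_self_add)) |>.trans
      (le_max_right β b))
  have hmono := enumOrd_strictMono hs
  obtain ⟨o, ho⟩ : β ∈ range (enumOrd s) := by rw [range_enumOrd hs]; exact Or.inr self_mem_Ici
  refine ⟨o, enumOrd s, hmono.strictMonoOn _, Subset.antisymm ?_ ?_⟩
  · rintro _ ⟨i, hi, rfl⟩
    refine (enumOrd_mem hs i).resolve_right fun h => ?_
    exact (hmono hi).not_ge (ho ▸ h)
  · intro x hx
    obtain ⟨i, rfl⟩ : x ∈ range (enumOrd s) := by rw [range_enumOrd hs]; exact Or.inl hx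
    exact ⟨i, hmono.lt_iff_lt.1 (ho ▸ hA hx), rfl⟩

theorem OT_spec (hA : A ⊆ Iio β) :
    ∃ g, StrictMonoOn g (Iio (OT A)) ∧ g '' Iio (OT A) = A :=
  csInf_mem (exists_strictMonoOn_Iio_image_eq hA)

theorem OT_le (hA : A ⊆ Iio β) : OT A ≤ β := by
  obtain ⟨g, hg, himage⟩ := OT_spec hA
  by_contra! hβ
  exact (le_apply_of_strictMonoOn_Iio hg hβ).not_gt (hA (himage ▸ mem_image_of_mem g hβ))

theorem OT_image {h : Ordinal.{u} → Ordinal.{u}} (hh : StrictMonoOn h A) :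
    OT (h '' A) = OT A := by
  have hcomp {k : Ordinal.{u} → Ordinal.{u}} {B : Set Ordinal.{u}} (hk : StrictMonoOn k B)
      {o : Ordinal.{u}} : (∃ g, StrictMonoOn g (Iio o) ∧ g '' Iio o = B) →
        ∃ g, StrictMonoOn g (Iio o) ∧ g '' Iio o = k '' B :=
    fun ⟨g, hg, himage⟩ =>
      ⟨k ∘ g, hk.comp hg (himage ▸ mapsTo_image g _), by rw [image_comp, himage]⟩
  unfold OT
  congr 1
  ext o
  refine ⟨fun hA => ?_, hcomp hh⟩
  simpa only [mem_ofPred_eq, hh.injOn.invFunOn_image subset_rfl] using hcomp hh.invFunOn hA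

theorem exists_strictMonoOn_image_eq_Iio_OT (hA : A ⊆ Iio β) :
    ∃ r : Ordinal.{u} → Ordinal.{u}, StrictMonoOn r A ∧ r '' A = Iio (OT A) := by
  obtain ⟨g, hg, himage⟩ := OT_spec hA
  generalize OT A = o at hg himage ⊢
  subst himage
  exact ⟨_, hg.invFunOn, hg.injOn.invFunOn_image subset_rfl⟩

end OrderType

theorem iSup_eq_iSup_of_interleave {x y : ℕ → Ordinal.{u}} (hxy : ∀ n, x n ≤ y n)
    (hyx : ∀ n, y n ≤ x (n + 1)) : ⨆ n, y n = ⨆ n, x n :=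
  le_antisymm (Ordinal.iSup_le fun n => (hyx n).trans (Ordinal.le_iSup x _))
    (Ordinal.iSup_le fun n => (hxy n).trans (Ordinal.le_iSup y n))

section Club

variable {c : Cardinal.{u}}

theorem IsClubIn.inter (hc : c.IsRegular) (hc₀ : ℵ₀ < c) {C D : Set Ordinal.{u}}
    (hC : IsClubIn C c.ord) (hD : IsClubIn D c.ord) : IsClubIn (C ∩ D) c.ord := by
  refine ⟨fun x hx => hC.1 x hx.1, fun a ha => ?_, fun T hT hne hlt =>
    ⟨hC.2.2 T (hT.trans inter_subset_left) hne hlt,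
      hD.2.2 T (hT.trans inter_subset_right) hne hlt⟩⟩
  choose! pC hpC using hC.2.1
  choose! pD hpD using hD.2.1
  set x : ℕ → Ordinal.{u} := fun n => (pD ∘ pC)^[n] a
  have hsucc (n : ℕ) : x (n + 1) = pD (pC (x n)) := Function.iterate_succ_apply' _ _ _
  have hx (n : ℕ) : x n < c.ord := by
    induction n with
    | zero => exact ha
    | succ n ih => rw [hsucc]; exact hD.1 _ (hpD _ (hC.1 _ (hpC _ ih).1)).1
  have hxC (n : ℕ) := hpC _ (hx n)
  have hxD (n : ℕ) : x (n + 1) ∈ D ∧ pC (x n) < x (n + 1) :=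
    hsucc n ▸ hpD _ (hC.1 _ (hxC n).1)
  have hCsup : ⨆ n, pC (x n) = ⨆ n, x n :=
    iSup_eq_iSup_of_interleave (fun n => (hxC n).2.le) (fun n => (hxD n).2.le)
  have hDsup : ⨆ n, x (n + 1) = ⨆ n, x n :=
    iSup_eq_iSup_of_interleave (fun n => ((hxC n).2.trans (hxD n).2).le) (fun _ => le_rfl)
  have hlt : ⨆ n, x n < c.ord := iSup_nat_lt_ord hc hc₀ hx
  refine ⟨⨆ n, x n, ⟨?_, ?_⟩, (hxC 0).2.trans_le ((Ordinal.le_iSup _ 0).trans hCsup.le)⟩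
  · rw [← hCsup]
    exact hC.2.2 _ (range_subset_iff.2 fun n => (hxC n).1) (range_nonempty _) (hCsup.trans_lt hlt)
  · rw [← hDsup]
    exact hD.2.2 _ (range_subset_iff.2 fun n => (hxD n).1) (range_nonempty _) (hDsup.trans_lt hlt)

theorem isClubIn_closurePoints_s14 (hc : c.IsRegular) (hc₀ : ℵ₀ < c)
    {t : Ordinal.{u} → Ordinal.{u}} (ht : ∀ μ < c.ord, t μ < c.ord) :
    IsClubIn {ν | ν < c.ord ∧ 0 < ν ∧ ∀ μ < ν, t μ < ν} c.ord := by
  have hsucc {y : Ordinal.{u}} (hy : y < c.ord) : y + 1 < c.ord :=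
    (isSuccLimit_ord hc.aleph0_le).add_one_lt hy
  refine ⟨fun ν hν => hν.1, fun a ha => ?_, fun T hT hne hlt => ?_⟩
  · set s : Ordinal.{u} → Ordinal.{u} := fun y => sSup (t '' Iio y) + 1
    set x : ℕ → Ordinal.{u} := fun n => s^[n] (a + 1)
    have hs {y : Ordinal.{u}} (hy : y < c.ord) : s y < c.ord := by
      refine hsucc (sSup_lt_ord_of_isRegular hc (mk_image_le.trans_lt ?_) ?_)
      · rw [Cardinal.mk_Iio_ordinal, Cardinal.lift_lt]
        exact lt_ord.1 hy
      · rintro _ ⟨μ, hμ, rfl⟩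
        exact ht μ (hμ.trans hy)
    have hx_succ (n : ℕ) : x (n + 1) = s (x n) := Function.iterate_succ_apply' _ _ _
    have hx (n : ℕ) : x n < c.ord := by
      induction n with
      | zero => exact hsucc ha
      | succ n ih => rw [hx_succ]; exact hs ih
    have ha_lt : a < ⨆ n, x n := (lt_add_one a).trans_le (Ordinal.le_iSup x 0)
    refine ⟨⨆ n, x n, ⟨iSup_nat_lt_ord hc hc₀ hx, zero_le.trans_lt ha_lt,
      fun μ hμ => ?_⟩, ha_lt⟩
    obtain ⟨n, hn⟩ := Ordinal.lt_iSup_iff.1 hμ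
    calc t μ ≤ sSup (t '' Iio (x n)) := le_csSup bddAbove_of_small (mem_image_of_mem t hn)
      _ < x (n + 1) := (lt_add_one _).trans_eq (hx_succ n).symm
      _ ≤ ⨆ n, x n := Ordinal.le_iSup x _
  · have hbdd : BddAbove T := ⟨c.ord, fun ν hν => (hT hν).1.le⟩
    obtain ⟨ν₀, hν₀⟩ := hne
    refine ⟨hlt, (hT hν₀).2.1.trans_le (le_csSup hbdd hν₀), fun μ hμ => ?_⟩
    obtain ⟨ν, hν, hμν⟩ := exists_lt_of_lt_csSup ⟨ν₀, hν₀⟩ hμ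
    exact ((hT hν).2.2 μ hμν).trans_le (le_csSup hbdd hν)

end Club

section FClosure

variable {α : Type*} (F : List α → α)

def closureStage (A : Set α) : ℕ → Set α
  | 0 => A
  | n + 1 => closureStage A n ∪ F '' {l | ∀ a ∈ l, a ∈ closureStage A n}

def fClosure (A : Set α) : Set α := ⋃ n, closureStage F A n

variable {F}

theorem closureStage_mono {A B : Set α} (hAB : A ⊆ B) (n : ℕ) :
    closureStage F A n ⊆ closureStage F B n := by
  induction n with
  | zero => exact hAB
  | succ n ih => exact union_subset_union ih (image_mono fun l hl a ha => ih (hl a ha))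

theorem monotone_closureStage (A : Set α) : Monotone (closureStage F A) :=
  monotone_nat_of_le_succ fun _ => subset_union_left

theorem fClosure_mono {A B : Set α} (hAB : A ⊆ B) : fClosure F A ⊆ fClosure F B :=
  iUnion_mono (closureStage_mono hAB)

theorem subset_fClosure (A : Set α) : A ⊆ fClosure F A :=
  subset_iUnion (closureStage F A) 0

theorem List.exists_forall_mem_of_monotone {ι : Type*} [Preorder ι] [IsDirectedOrder ι]
    [Nonempty ι] {S : ι → Set α} (hS : Monotone S) (l : List α) (hl : ∀ a ∈ l, ∃ i, a ∈ S i) :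
    ∃ i, ∀ a ∈ l, a ∈ S i := by
  induction l with
  | nil => exact ⟨Classical.arbitrary ι, by simp⟩
  | cons a l ih =>
    obtain ⟨i, hi⟩ := hl a List.mem_cons_self
    obtain ⟨j, hj⟩ := ih fun b hb => hl b (List.mem_cons_of_mem a hb)
    obtain ⟨k, hik, hjk⟩ := exists_ge_ge i j
    exact ⟨k, List.forall_mem_cons.2 ⟨hS hik hi, fun b hb => hS hjk (hj b hb)⟩⟩

theorem apply_mem_fClosure {A : Set α} {l : List α} (hl : ∀ a ∈ l, a ∈ fClosure F A) :
    F l ∈ fClosure F A := by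
  obtain ⟨n, hn⟩ := l.exists_forall_mem_of_monotone (monotone_closureStage A)
    fun a ha => mem_iUnion.1 (hl a ha)
  exact mem_iUnion.2 ⟨n + 1, Or.inr ⟨l, hn, rfl⟩⟩

theorem fClosure_subset {A B : Set α} (hAB : A ⊆ B)
    (hB : ∀ l : List α, (∀ a ∈ l, a ∈ B) → F l ∈ B) : fClosure F A ⊆ B := by
  refine iUnion_subset fun n => ?_
  induction n with
  | zero => exact hAB
  | succ n ih =>
    exact union_subset ih (image_subset_iff.2 fun l hl => hB l fun a ha => ih (hl a ha))

theorem Set.Countable.fClosure {A : Set α} (hA : A.Countable) : (fClosure F A).Countable := by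
  refine countable_iUnion fun n => ?_
  induction n with
  | zero => exact hA
  | succ n ih =>
    have := ih.to_subtype
    refine ih.union (((countable_range (List.map ((↑) : closureStage F A n → α))).mono ?_).image F)
    intro l hl
    lift l to List (closureStage F A n) using hl
    exact ⟨l, rfl⟩

theorem fClosure_iUnion {ι : Type*} [Preorder ι] [IsDirectedOrder ι] [Nonempty ι]
    {A : ι → Set α} (hA : Monotone A) : fClosure F (⋃ i, A i) = ⋃ i, fClosure F (A i) := by
  refine Subset.antisymm (iUnion_subset fun n => ?_)
    (iUnion_subset fun i => fClosure_mono (subset_iUnion A i))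
  suffices closureStage F (⋃ i, A i) n ⊆ ⋃ i, closureStage F (A i) n from
    this.trans (iUnion_mono fun i => subset_iUnion _ n)
  induction n with
  | zero => exact subset_rfl
  | succ n ih =>
    rintro _ (hx | ⟨l, hl, rfl⟩)
    · obtain ⟨i, hi⟩ := mem_iUnion.1 (ih hx)
      exact mem_iUnion.2 ⟨i, Or.inl hi⟩
    · obtain ⟨i, hi⟩ := l.exists_forall_mem_of_monotone
        (fun i j hij => closureStage_mono (hA hij) n) fun a ha => mem_iUnion.1 (ih (hl a ha))
      exact mem_iUnion.2 ⟨i, Or.inr ⟨l, hi, rfl⟩⟩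

theorem fClosure_Iio_of_isSuccLimit {F : List Ordinal.{u} → Ordinal.{u}} {ν : Ordinal.{u}}
    (hν : IsSuccLimit ν) : fClosure F (Iio ν) = ⋃ μ < ν, fClosure F (Iio μ) := by
  have : Nonempty (Iio ν) := ⟨⟨0, hν.bot_lt⟩⟩
  have hIio : Iio ν = ⋃ μ : Iio ν, Iio (μ : Ordinal) := by
    ext x
    simpa only [mem_Iio, mem_iUnion, Subtype.exists, exists_prop] using hν.lt_iff_exists_lt
  rw [hIio, fClosure_iUnion (A := fun μ : Iio ν => Iio (μ : Ordinal))
    fun _ _ h => Iio_subset_Iio h, iUnion_subtype]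
  rfl

end FClosure

section Concatenation

variable {α : Type*} (φ : Ordinal.{u} → ℕ → α)

def concatEnum (ξ : Ordinal.{u}) : α :=
  φ (ξ / ω) (Function.invFun Nat.cast (ξ % ω))

theorem concatEnum_omega0_mul_add (μ : Ordinal.{u}) (n : ℕ) :
    concatEnum φ (ω * μ + n) = φ μ n := by
  have hn := natCast_lt_omega0 n
  rw [concatEnum, mul_add_div _ omega0_ne_zero, div_eq_zero_of_lt hn, add_zero,
    mul_add_mod_self, mod_eq_of_lt hn, Function.leftInverse_invFun Nat.cast_injective n]

theorem image_concatEnum_Iio {ν : Ordinal.{u}} (hν : ∀ μ < ν, ω * (μ + 1) ≤ ν) :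
    concatEnum φ '' Iio ν = ⋃ μ < ν, range (φ μ) := by
  refine Subset.antisymm ?_ (iUnion₂_subset fun μ hμ => ?_)
  · rintro _ ⟨ξ, hξ, rfl⟩
    have hdiv : ξ / ω < ν := (div_le_of_le_mul (le_mul_right ξ omega0_pos)).trans_lt hξ
    exact mem_iUnion₂.2 ⟨ξ / ω, hdiv, mem_range_self _⟩
  · rintro _ ⟨n, rfl⟩
    refine ⟨ω * μ + n, ?_, concatEnum_omega0_mul_add φ μ n⟩
    calc ω * μ + n < ω * μ + ω := by gcongr; exact natCast_lt_omega0 n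
      _ = ω * (μ + 1) := (mul_add_one ω μ).symm
      _ ≤ ν := hν μ hμ

end Concatenation

theorem isSuccLimit_of_omega0_mul_add_one_lt {ν : Ordinal.{u}} (h0 : 0 < ν)
    (hν : ∀ μ < ν, ω * (μ + 1) < ν) : IsSuccLimit ν :=
  Ordinal.isSuccLimit_iff.2 ⟨h0.ne', isSuccPrelimit_of_succ_lt fun μ hμ => by
    rw [succ_eq_add_one]
    exact (le_mul_right _ omega0_pos).trans_lt (hν μ hμ)⟩

theorem isSuccLimit_omega1 : IsSuccLimit omega1.{u} :=
  isSuccLimit_ord (aleph0_le_aleph 1)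

theorem omega0_mul_add_one_lt_omega1 {μ : Ordinal.{u}} (hμ : μ < omega1) :
    ω * (μ + 1) < omega1 :=
  omega0_mul_lt_ord aleph0_lt_aleph_one (isSuccLimit_omega1.add_one_lt hμ)

section ClosureOfOmega1

variable (F : List Ordinal.{u} → Ordinal.{u})

theorem fClosure_Iio_subset_Iio_omega2
    (hF : ∀ l : List Ordinal, (∀ a ∈ l, a < omega2) → F l < omega2) {ν : Ordinal.{u}}
    (hν : ν ≤ omega1) : fClosure F (Iio ν) ⊆ Iio omega2 :=
  fClosure_subset (Iio_subset_Iio (hν.trans omega1_lt_omega2.le)) hF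

theorem exists_concatEnum_image_Iio_eq_fClosure :
    ∃ φ : Ordinal.{u} → ℕ → Ordinal.{u}, ∀ ν ≤ omega1, 0 < ν → (∀ μ < ν, ω * (μ + 1) < ν) →
      concatEnum φ '' Iio ν = fClosure F (Iio ν) := by
  have hne (μ : Ordinal.{u}) : (fClosure F (Iio μ)).Nonempty :=
    ⟨F [], apply_mem_fClosure (by simp)⟩
  choose! φ hφ using fun μ (hμ : μ < omega1) =>
    (countable_Iio_of_lt_omega1 hμ).fClosure.exists_eq_range (hne μ)
  refine ⟨φ, fun ν hν h0 hω => ?_⟩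
  rw [image_concatEnum_Iio φ fun μ hμ => (hω μ hμ).le,
    fClosure_Iio_of_isSuccLimit (isSuccLimit_of_omega0_mul_add_one_lt h0 hω)]
  exact iUnion₂_congr fun μ hμ => (hφ μ (hμ.trans_le hν)).symm

theorem exists_lt_omega2_fClosure_Iio_omega1_subset
    (hF : ∀ l : List Ordinal, (∀ a ∈ l, a < omega2) → F l < omega2) :
    ∃ β < omega2, fClosure F (Iio omega1) ⊆ Iio β := by
  have hbdd (ν : Ordinal.{u}) (hν : ν ≤ omega1) : BddAbove (fClosure F (Iio ν)) :=
    ⟨omega2, fun x hx => (fClosure_Iio_subset_Iio_omega2 F hF hν hx).le⟩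
  set b : Ordinal.{u} → Ordinal.{u} := fun ν => sSup (fClosure F (Iio ν)) + 1
  have hb (ν : Ordinal.{u}) (hν : ν < omega1) : b ν < omega2 :=
    (isSuccLimit_ord (aleph0_le_aleph 2)).add_one_lt
      ((countable_Iio_of_lt_omega1 hν).fClosure.sSup_lt_ord isRegular_aleph_two
        (aleph0_lt_aleph_one.trans (aleph_lt_aleph.2 one_lt_two))
        (fClosure_Iio_subset_Iio_omega2 F hF hν.le))
  refine ⟨sSup (b '' Iio omega1), sSup_lt_ord_of_isRegular isRegular_aleph_two
    (mk_image_le.trans_lt ?_) (forall_mem_image.2 hb), fun x hx => ?_⟩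
  · rw [Cardinal.mk_Iio_ordinal, Cardinal.lift_lt, omega1, card_ord]
    exact aleph_lt_aleph.2 one_lt_two
  · rw [fClosure_Iio_of_isSuccLimit isSuccLimit_omega1] at hx
    obtain ⟨ν, hν, hxν⟩ := mem_iUnion₂.1 hx
    calc x ≤ sSup (fClosure F (Iio ν)) := le_csSup (hbdd ν hν.le) hxν
      _ < b ν := lt_add_one _
      _ ≤ sSup (b '' Iio omega1) := le_csSup bddAbove_of_small (mem_image_of_mem b hν)

theorem exists_isClubIn_fClosure_Iio_inter_Iio_omega1 :
    ∃ E, IsClubIn E omega1 ∧ ∀ ν ∈ E, ν < omega1 ∧ 0 < ν ∧ (∀ μ < ν, ω * (μ + 1) < ν) ∧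
      fClosure F (Iio ν) ∩ Iio omega1 = Iio ν := by
  set t : Ordinal.{u} → Ordinal.{u} := fun μ =>
    max (ω * (μ + 1)) (sSup (fClosure F (Iio μ) ∩ Iio omega1) + 1)
  have ht (μ : Ordinal.{u}) (hμ : μ < omega1) : t μ < omega1 :=
    max_lt (omega0_mul_add_one_lt_omega1 hμ) (isSuccLimit_omega1.add_one_lt
      (((countable_Iio_of_lt_omega1 hμ).fClosure.mono inter_subset_left).sSup_lt_ord
        isRegular_aleph_one aleph0_lt_aleph_one fun x hx => hx.2))
  refine ⟨_, isClubIn_closurePoints_s14 isRegular_aleph_one aleph0_lt_aleph_one ht, ?_⟩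
  rintro ν ⟨hν₁, hν₀, hνt⟩
  have hνω (μ : Ordinal.{u}) (hμ : μ < ν) : ω * (μ + 1) < ν :=
    (le_max_left _ _).trans_lt (hνt μ hμ)
  refine ⟨hν₁, hν₀, hνω, Subset.antisymm ?_ fun x hx => ⟨subset_fClosure _ hx, hx.trans hν₁⟩⟩
  rintro x ⟨hx, hx₁⟩
  rw [fClosure_Iio_of_isSuccLimit (isSuccLimit_of_omega0_mul_add_one_lt hν₀ hνω)] at hx
  obtain ⟨μ, hμ, hxμ⟩ := mem_iUnion₂.1 hx
  calc x ≤ sSup (fClosure F (Iio μ) ∩ Iio omega1) :=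
        le_csSup ⟨omega1, fun y hy => hy.2.le⟩ ⟨hxμ, hx₁⟩
    _ < t μ := (lt_add_one _).trans_le (le_max_right _ _)
    _ < ν := hνt μ hμ

end ClosureOfOmega1

theorem stmt14_general
    (f : Ordinal → Ordinal)
    (hdom : ∀ α, 0 < α → α < omega2 →
      ∀ π : Ordinal → Ordinal, (∀ ξ < omega1, π ξ < α) →
        Set.SurjOn π (Set.Iio omega1) (Set.Iio α) →
        ∃ D, IsClubIn D omega1 ∧ ∀ ν ∈ D, OT (π '' Set.Iio ν) < f ν)
    (F : List Ordinal → Ordinal) (hF : ∀ l : List Ordinal, (∀ a ∈ l, a < omega2) → F l < omega2)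
    (S : Set Ordinal) (hS : IsStationaryIn S omega1) :
    ∃ X : Set Ordinal, X.Countable ∧ X ⊆ Set.Iio omega2 ∧
      (∀ l : List Ordinal, (∀ a ∈ l, a ∈ X) → F l ∈ X) ∧
      ∃ δ ∈ S, X ∩ Set.Iio omega1 = Set.Iio δ ∧ OT X < f δ := by
  set X := fClosure F (Iio omega1)
  obtain ⟨β, hβ, hXβ⟩ := exists_lt_omega2_fClosure_Iio_omega1_subset F hF
  obtain ⟨r, hr, hrX⟩ := exists_strictMonoOn_image_eq_Iio_OT hXβ
  obtain ⟨φ, hφ⟩ := exists_concatEnum_image_Iio_eq_fClosure F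
  set π := r ∘ concatEnum φ
  have hπ : π '' Iio omega1 = Iio (OT X) := by
    rw [image_comp, ← hrX,
      hφ omega1 le_rfl isSuccLimit_omega1.bot_lt fun _ => omega0_mul_add_one_lt_omega1]
  have hX₀ : 0 < OT X := by
    have : r (F []) ∈ Iio (OT X) := hrX ▸ mem_image_of_mem r (apply_mem_fClosure (by simp))
    exact zero_le.trans_lt this
  obtain ⟨D, hD, hDf⟩ := hdom (OT X) hX₀ ((OT_le hXβ).trans_lt hβ) π
    (fun ξ hξ => hπ.subset (mem_image_of_mem π hξ)) hπ.superset
  obtain ⟨E, hE, hEν⟩ := exists_isClubIn_fClosure_Iio_inter_Iio_omega1 F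
  obtain ⟨ν, hνS, hνE, hνD⟩ := hS.2 _ (hE.inter isRegular_aleph_one aleph0_lt_aleph_one hD)
  obtain ⟨hν₁, hν₀, hνω, hνY⟩ := hEν ν hνE
  refine ⟨fClosure F (Iio ν), (countable_Iio_of_lt_omega1 hν₁).fClosure,
    fClosure_Iio_subset_Iio_omega2 F hF hν₁.le, fun _ => apply_mem_fClosure, ν, hνS, hνY, ?_⟩
  calc OT (fClosure F (Iio ν)) = OT (π '' Iio ν) := by
        rw [image_comp, hφ ν hν₁.le hν₀ hνω,
          OT_image (hr.mono (fClosure_mono (Iio_subset_Iio hν₁.le)))]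
    _ < f ν := hDf ν hνD

/-- Lemma (projective stationarity of `𝒦^f`): suppose `f : ω₁ → ω₁` dominates, modulo
clubs, the canonical function of every nonzero `α < ω₂` (where the canonical functions for
`α` arise from surjections `π : ω₁ → α` as `ν ↦ ot(π '' ν)`).  Then for every finitary
function `F : [ω₂]^{<ω} → ω₂` and every stationary `S ⊆ ω₁` there is a countable
`X ⊆ ω₂` closed under `F` with `δ := X ∩ ω₁ ∈ S` and `f δ > ot X`. -/
theorem stmt14
    (f : Ordinal → Ordinal) (hf : ∀ ν < omega1, f ν < omega1)
    (hdom : ∀ α, 0 < α → α < omega2 →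
      ∀ π : Ordinal → Ordinal, (∀ ξ < omega1, π ξ < α) →
        Set.SurjOn π (Set.Iio omega1) (Set.Iio α) →
        ∃ D, IsClubIn D omega1 ∧ ∀ ν ∈ D, OT (π '' Set.Iio ν) < f ν)
    (F : List Ordinal → Ordinal) (hF : ∀ l : List Ordinal, (∀ a ∈ l, a < omega2) → F l < omega2)
    (S : Set Ordinal) (hS : IsStationaryIn S omega1) :
    ∃ X : Set Ordinal, X.Countable ∧ X ⊆ Set.Iio omega2 ∧
      (∀ l : List Ordinal, (∀ a ∈ l, a ∈ X) → F l ∈ X) ∧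
      ∃ δ ∈ S, X ∩ Set.Iio omega1 = Set.Iio δ ∧ OT X < f δ :=
  stmt14_general f hdom F hF S hS
end
end

section
/- Let $N$ be a countable elementary submodel of a structure $(H(\chi); \in)$ containing a function $f : \omega_1 \to \omega_1$ such that for every nonzero $\beta < \omega_2$ in $N$ there is a club $C \in N$ of $\omega_1$ with $\mathrm{ot}(e_\beta''\nu) < f(\nu)$ for all $\nu \in C$ (where $e_\beta : \omega_1 \to \beta$ is a fixed surjection in $N$). Then $\mathrm{ot}(N \cap \omega_2) \leq f(\delta_N)$, where $\delta_N = N \cap \omega_1$. In particular, $\mathrm{ot}(N \cap \beta) = \mathrm{ot}(e_\beta''\delta_N) < f(\delta_N)$ for every nonzero $\beta \in N \cap \omega_2$. -/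
noncomputable section

universe u

open Cardinal

/-! For a bounded set of ordinals, `OT` is the order type of `<` on it, computed one universe up
and brought back by `lift`. If `ot(N ∩ ω₂) > f(δ_N)`, the element of `N ∩ ω₂` of rank `f(δ_N)` lies
below some `γ ∈ N ∩ ω₂`, so `ot(N ∩ γ) ≥ f(δ_N) + 1`, contradicting
`ot(N ∩ γ) = ot(e_γ '' δ_N) < f(δ_N)`. -/

section OrderType

open Ordinal Set

variable {A B : Set Ordinal.{u}} {g : Ordinal.{u} → Ordinal.{u}} {o : Ordinal.{u}}

theorem lift_eq_typeLT_of_strictMonoOn (hg : StrictMonoOn g (Iio o)) (him : g '' Iio o = A) :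
    lift.{u + 1} o = typeLT A := by
  subst him
  rw [← type_lt_Iio]
  exact (StrictMonoOn.orderIso g _ hg).ordinalType_congr

theorem lift_le_typeLT_of_strictMonoOn (hg : StrictMonoOn g (Iio o)) (him : g '' Iio o ⊆ B) :
    lift.{u + 1} o ≤ typeLT B :=
  (lift_eq_typeLT_of_strictMonoOn hg rfl).trans_le (type_mono him)

theorem exists_strictMonoOn_image_eq_of_typeLT_eq (h : typeLT A = lift.{u + 1} o) :
    ∃ g : Ordinal.{u} → Ordinal.{u}, StrictMonoOn g (Iio o) ∧ g '' Iio o = A := by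
  obtain ⟨G⟩ := type_eq.1 (h.trans (type_lt_Iio o).symm)
  let E : Iio o ≃o A := (OrderIso.ofRelIsoLT G).symm
  refine ⟨fun x => if hx : x < o then E ⟨x, hx⟩ else 0, fun x hx y hy hxy => ?_, ?_⟩
  · simp only [dif_pos (show x < o from hx), dif_pos (show y < o from hy)]
    exact Subtype.coe_lt_coe.2 (E.strictMono (Subtype.mk_lt_mk.2 hxy))
  · ext a
    constructor
    · rintro ⟨x, hx, rfl⟩
      simp only [dif_pos (show x < o from hx), Subtype.coe_prop]
    · intro ha
      obtain ⟨⟨x, hx⟩, hxa⟩ := E.surjective ⟨a, ha⟩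
      exact ⟨x, hx, by simp [dif_pos (show x < o from hx), hxa]⟩

theorem lift_OT (hA : BddAbove A) : lift.{u + 1} (OT A) = typeLT A := by
  obtain ⟨b, hb⟩ := hA
  have hsmall : typeLT A ≤ lift.{u + 1} (Order.succ b) :=
    (type_mono fun x hx => Order.lt_succ_of_le (hb hx)).trans_eq (type_lt_Iio _)
  obtain ⟨o, ho⟩ := mem_range_lift_of_le hsmall
  have hOT : {o' | ∃ g : Ordinal.{u} → Ordinal.{u},
      StrictMonoOn g (Iio o') ∧ g '' Iio o' = A} = {o} := by
    ext o'
    refine ⟨fun ⟨g, hg, him⟩ => lift_inj.1 ((lift_eq_typeLT_of_strictMonoOn hg him).trans ho.symm),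
      fun h => ?_⟩
    rw [mem_singleton_iff.1 h]
    exact exists_strictMonoOn_image_eq_of_typeLT_eq ho.symm
  rw [OT, hOT, csInf_singleton, ho]

theorem exists_strictMonoOn_image_eq_OT (hA : BddAbove A) :
    ∃ g : Ordinal.{u} → Ordinal.{u}, StrictMonoOn g (Iio (OT A)) ∧ g '' Iio (OT A) = A :=
  exists_strictMonoOn_image_eq_of_typeLT_eq (lift_OT hA).symm

theorem le_OT_of_strictMonoOn (hB : BddAbove B) (hg : StrictMonoOn g (Iio o))
    (him : g '' Iio o ⊆ B) : o ≤ OT B :=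
  lift_le.1 ((lift_le_typeLT_of_strictMonoOn hg him).trans_eq (lift_OT hB).symm)

theorem OT_le_of_forall_exists_OT_inter_Iio_lt {c : Ordinal.{u}} (hA : BddAbove A)
    (h : ∀ β ∈ A, ∃ γ ∈ A, β < γ ∧ OT (A ∩ Iio γ) < c) : OT A ≤ c := by
  by_contra! hcA
  obtain ⟨g, hg, him⟩ := exists_strictMonoOn_image_eq_OT hA
  have hgc : g c ∈ A := him ▸ mem_image_of_mem g hcA
  obtain ⟨γ, hγ, hcγ, hγc⟩ := h _ hgc
  have hsucc : Iio (Order.succ c) ⊆ Iio (OT A) := fun x hx =>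
    (Order.lt_succ_iff.1 hx).trans_lt hcA
  have hsegment : g '' Iio (Order.succ c) ⊆ A ∩ Iio γ := by
    rintro _ ⟨x, hx, rfl⟩
    refine ⟨him ▸ mem_image_of_mem g (hsucc hx), ?_⟩
    exact (hg.monotoneOn (hsucc hx) hcA (Order.lt_succ_iff.1 hx)).trans_lt hcγ
  have hle := le_OT_of_strictMonoOn (hA.mono inter_subset_left) (hg.mono hsucc) hsegment
  exact (Order.lt_succ c).not_ge (hle.trans hγc.le)

end OrderType

/-- `N` is represented by its set of ordinals. Of the standard facts about countable elementary
submodels, the hypotheses record that `N ∩ ω₂` has no largest element, that `N ∩ β = e_β '' δ_N`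
for the surjections `e_β : ω₁ → β` in `N`, and that `δ_N` lies in every club belonging to `N`. -/
theorem stmt15_general
    (e : Ordinal → Ordinal → Ordinal) (f : Ordinal → Ordinal)
    (N : Set Ordinal)
    (δ : Ordinal)
    (hnomax : ∀ β ∈ N ∩ Set.Iio omega2, ∃ γ ∈ N ∩ Set.Iio omega2, β < γ)
    (htrace : ∀ β ∈ N, 0 < β → β < omega2 → N ∩ Set.Iio β = e β '' Set.Iio δ)
    (hclub : ∀ β ∈ N, 0 < β → β < omega2 →
      ∃ C, IsClubIn C omega1 ∧ δ ∈ C ∧ ∀ ν ∈ C, OT (e β '' Set.Iio ν) < f ν) :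
    OT (N ∩ Set.Iio omega2) ≤ f δ ∧
      ∀ β ∈ N, 0 < β → β < omega2 →
        OT (N ∩ Set.Iio β) = OT (e β '' Set.Iio δ) ∧ OT (e β '' Set.Iio δ) < f δ := by
  have hsegment : ∀ β ∈ N, 0 < β → β < omega2 →
      OT (N ∩ Set.Iio β) = OT (e β '' Set.Iio δ) ∧ OT (e β '' Set.Iio δ) < f δ := by
    intro β hβ hpos hβω
    obtain ⟨C, -, hδC, hbound⟩ := hclub β hβ hpos hβω
    exact ⟨congrArg OT (htrace β hβ hpos hβω), hbound δ hδC⟩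
  refine ⟨OT_le_of_forall_exists_OT_inter_Iio_lt ⟨omega2, fun _ h => h.2.le⟩ fun β hβ => ?_,
    hsegment⟩
  obtain ⟨γ, hγ, hβγ⟩ := hnomax β hβ
  obtain ⟨heq, hlt⟩ := hsegment γ hγ.1 (zero_le.trans_lt hβγ) hγ.2
  refine ⟨γ, hγ, hβγ, ?_⟩
  rwa [Set.inter_assoc, Set.Iio_inter_Iio, min_eq_right hγ.2.le, heq]

/-- If `N` is a countable elementary submodel of `(H(χ); ∈)` containing `f : ω₁ → ω₁` such
that for every nonzero `β ∈ N ∩ ω₂` there is a club `C ∈ N` of `ω₁` (so in particular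
`δ_N ∈ C`) with `ot(e_β '' ν) < f ν` for all `ν ∈ C`, then `ot(N ∩ ω₂) ≤ f(δ_N)`; in
particular `ot(N ∩ β) = ot(e_β '' δ_N) < f(δ_N)` for every nonzero `β ∈ N ∩ ω₂`.
`N` is represented by its set of ordinals; the hypotheses record the standard facts about
countable elementary submodels: `N ∩ ω₁ = δ_N`, `N ∩ ω₂` has no largest element, and
`N ∩ β = e_β '' δ_N` for the surjections `e_β : ω₁ → β` belonging to `N`. -/
theorem stmt15
    (e : Ordinal → Ordinal → Ordinal) (f : Ordinal → Ordinal)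
    (N : Set Ordinal) (hcount : N.Countable)
    (δ : Ordinal) (hδ : δ < omega1)
    (hheight : N ∩ Set.Iio omega1 = Set.Iio δ)
    (hnomax : ∀ β ∈ N ∩ Set.Iio omega2, ∃ γ ∈ N ∩ Set.Iio omega2, β < γ)
    (htrace : ∀ β ∈ N, 0 < β → β < omega2 → N ∩ Set.Iio β = e β '' Set.Iio δ)
    (hclub : ∀ β ∈ N, 0 < β → β < omega2 →
      ∃ C, IsClubIn C omega1 ∧ δ ∈ C ∧ ∀ ν ∈ C, OT (e β '' Set.Iio ν) < f ν) :
    OT (N ∩ Set.Iio omega2) ≤ f δ ∧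
      ∀ β ∈ N, 0 < β → β < omega2 →
        OT (N ∩ Set.Iio β) = OT (e β '' Set.Iio δ) ∧ OT (e β '' Set.Iio δ) < f δ :=
  stmt15_general e f N δ hnomax htrace hclub
end
end

section
/- In the forcing $\mathcal{Q}$ of Section 2 (finite approximations to clubs $D_\alpha \subseteq \alpha$ for $\alpha \in S^2_1$ using intervals): for every condition $q$ with $\alpha \in X_q$, if a limit ordinal $\delta < \alpha$ is not of the form $\min(I)$ for any $I \in \mathcal{I}^q_\alpha$ but some $I \in \mathcal{I}^q_\alpha$ satisfies $\min(I) < \delta$, then there is an extension $q'$ of $q$ forcing that $D^{\dot G}_\alpha \cap \delta$ is bounded below $\delta$. Consequently, in the generic extension the set $D^G_\alpha = \{\min(I) : I \in \mathcal{I}^q_\alpha, q \in G, \alpha \in X_q\}$ is closed in $\alpha$. -/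
noncomputable section

universe u

open Cardinal

/-- A condition of the forcing `𝒬` of Section 2 (its interval part): a finite set
`X ⊆ S²₁ = {α < ω₂ : cf α = ω₁}` and, for each `α ∈ X`, a finite collection `I α` of
pairwise disjoint half-open intervals `[γ₀, γ₁)` (coded as pairs `(γ₀, γ₁)`) with
`γ₀ < γ₁ < α`. -/
structure IntCond where
  X : Finset Ordinal
  I : Ordinal → Finset (Ordinal × Ordinal)
  hX : ∀ α ∈ X, α < omega2 ∧ α.cof = Cardinal.aleph 1
  hI : ∀ α ∈ X, ∀ p ∈ I α, p.1 < p.2 ∧ p.2 < α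
  hdisj : ∀ α ∈ X, ∀ p ∈ I α, ∀ p' ∈ I α, p ≠ p' → p.2 ≤ p'.1 ∨ p'.2 ≤ p.1
  hempty : ∀ α, α ∉ X → I α = ∅

/-- `q₁` extends `q₀`: `X` grows, and every interval of `q₀` grows to the right into an
interval of `q₁` with the same left endpoint. -/
def IntExt (q₁ q₀ : IntCond) : Prop :=
  q₀.X ⊆ q₁.X ∧ ∀ α ∈ q₀.X, ∀ p ∈ q₀.I α, ∃ p' ∈ q₁.I α, p'.1 = p.1 ∧ p.2 ≤ p'.2

/-- The left endpoints at `α` decided by a filter `G`. -/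
def DG (G : Set IntCond) (α : Ordinal) : Set Ordinal :=
  {γ | ∃ q ∈ G, α ∈ q.X ∧ ∃ p ∈ q.I α, p.1 = γ}

/-!
An interval `[γ₀, γ₁)` of a condition blocks every later left endpoint in `(γ₀, γ₁)`, since
its extensions keep `γ₀` and are disjoint from all other intervals. So, stretching the interval
with the largest left endpoint below `δ` until it reaches `δ` bounds `D^Ġ_α ∩ δ` by that left
endpoint. For closure, the conditions that either put `δ` into `D_α` or bound `D^Ġ_α ∩ δ` are
dense (when no left endpoint lies below `δ`, add the interval `[δ, δ + 1)`), and a generic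
filter meets them; the second alternative contradicts `δ` being a limit point of `D^G_α`.
-/

def IsIntervalFamily (α : Ordinal) (J : Finset (Ordinal × Ordinal)) : Prop :=
  (∀ p ∈ J, p.1 < p.2 ∧ p.2 < α) ∧ ∀ p ∈ J, ∀ p' ∈ J, p ≠ p' → p.2 ≤ p'.1 ∨ p'.2 ≤ p.1

namespace IsIntervalFamily

variable {α : Ordinal} {J : Finset (Ordinal × Ordinal)}

lemma mono {J' : Finset (Ordinal × Ordinal)} (hJ : IsIntervalFamily α J) (h : J' ⊆ J) :
    IsIntervalFamily α J' :=
  ⟨fun p hp => hJ.1 p (h hp), fun p hp p' hp' => hJ.2 p (h hp) p' (h hp')⟩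

lemma insert (hJ : IsIntervalFamily α J) {r : Ordinal × Ordinal} (hr : r.1 < r.2 ∧ r.2 < α)
    (hsep : ∀ p ∈ J, p ≠ r → p.2 ≤ r.1 ∨ r.2 ≤ p.1) : IsIntervalFamily α (insert r J) := by
  refine ⟨fun p hp => ?_, fun p hp p' hp' hne => ?_⟩
  · rcases Finset.mem_insert.1 hp with rfl | hp
    exacts [hr, hJ.1 p hp]
  · rcases Finset.mem_insert.1 hp with rfl | hpJ <;> rcases Finset.mem_insert.1 hp' with rfl | hp'J
    · exact absurd rfl hne
    · exact (hsep p' hp'J hne.symm).symm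
    · exact hsep p hpJ hne
    · exact hJ.2 p hpJ p' hp'J hne

lemma fst_le_of_fst_lt_snd (hJ : IsIntervalFamily α J) {p r : Ordinal × Ordinal} (hp : p ∈ J)
    (hr : r ∈ J) (hrp : r.1 < p.2) : r.1 ≤ p.1 := by
  obtain rfl | hne := eq_or_ne r p
  · exact le_rfl
  rcases hJ.2 r hr p hp hne with h | h
  · exact ((hJ.1 r hr).1.trans_le h).le
  · exact absurd hrp h.not_gt

end IsIntervalFamily

namespace IntCond

lemma isIntervalFamily (q : IntCond) (α : Ordinal) : IsIntervalFamily α (q.I α) := by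
  by_cases hα : α ∈ q.X
  · exact ⟨q.hI α hα, q.hdisj α hα⟩
  · simp [IsIntervalFamily, q.hempty α hα]

lemma mem_X_of_mem_I {q : IntCond} {α : Ordinal} {p : Ordinal × Ordinal} (hp : p ∈ q.I α) :
    α ∈ q.X := by
  by_contra hα
  simp [q.hempty α hα] at hp

def update (q : IntCond) (α : Ordinal) (hα : α < omega2 ∧ α.cof = aleph 1)
    (J : Finset (Ordinal × Ordinal)) (hJ : IsIntervalFamily α J) : IntCond where
  X := insert α q.X
  I := Function.update q.I α J
  hX β hβ := by
    rcases Finset.mem_insert.1 hβ with rfl | hβ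
    exacts [hα, q.hX β hβ]
  hI β _ := by
    rcases eq_or_ne β α with rfl | hne
    · simpa using hJ.1
    · simpa [hne] using (q.isIntervalFamily β).1
  hdisj β _ := by
    rcases eq_or_ne β α with rfl | hne
    · simpa using hJ.2
    · simpa [hne] using (q.isIntervalFamily β).2
  hempty β hβ := by
    rw [Finset.mem_insert, not_or] at hβ
    simpa [hβ.1] using q.hempty β hβ.2

variable {q : IntCond} {α : Ordinal} {hα : α < omega2 ∧ α.cof = aleph 1}
  {J : Finset (Ordinal × Ordinal)} {hJ : IsIntervalFamily α J}

@[simp]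
lemma update_I_self : (q.update α hα J hJ).I α = J := by
  simp [update]

lemma intExt_update (hext : ∀ p ∈ q.I α, ∃ p' ∈ J, p'.1 = p.1 ∧ p.2 ≤ p'.2) :
    IntExt (q.update α hα J hJ) q := by
  refine ⟨Finset.subset_insert α q.X, fun β _ p hp => ?_⟩
  rcases eq_or_ne β α with rfl | hne
  · simpa using hext p hp
  · exact ⟨p, by simpa [update, hne] using hp, rfl, le_rfl⟩

end IntCond

lemma IntExt.refl (q : IntCond) : IntExt q q :=
  ⟨Finset.Subset.refl _, fun _ _ p hp => ⟨p, hp, rfl, le_rfl⟩⟩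

lemma IntExt.fst_le_of_fst_lt_snd {q q' : IntCond} (h : IntExt q' q) {α : Ordinal}
    {p r : Ordinal × Ordinal} (hp : p ∈ q.I α) (hr : r ∈ q'.I α) (hrp : r.1 < p.2) :
    r.1 ≤ p.1 := by
  obtain ⟨p', hp', hfst, hsnd⟩ := h.2 α (IntCond.mem_X_of_mem_I hp) p hp
  rw [← hfst]
  exact (q'.isIntervalFamily α).fst_le_of_fst_lt_snd hp' hr (hrp.trans_le hsnd)

/-- `q` forces `D^Ġ_α ∩ δ ⊆ β + 1`. -/
def ForcesBoundedBelow (q : IntCond) (α δ β : Ordinal) : Prop :=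
  ∀ q' : IntCond, IntExt q' q → ∀ p ∈ q'.I α, p.1 < δ → p.1 ≤ β

lemma IntCond.exists_intExt_forcesBoundedBelow {q : IntCond} {α δ : Ordinal} (hα : α ∈ q.X)
    (hδα : δ < α) (hlow : ∃ p ∈ q.I α, p.1 < δ) :
    ∃ q' : IntCond, IntExt q' q ∧ ∃ β < δ, ForcesBoundedBelow q' α δ β := by
  classical
  have hq := q.isIntervalFamily α
  obtain ⟨p, hpS, hmax⟩ := Finset.exists_max_image ((q.I α).filter (·.1 < δ)) (·.1)
    (by obtain ⟨p, hp, h⟩ := hlow; exact ⟨p, Finset.mem_filter.2 ⟨hp, h⟩⟩)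
  obtain ⟨hp, hpδ⟩ := Finset.mem_filter.1 hpS
  set p' : Ordinal × Ordinal := (p.1, max p.2 δ)
  have hp' : p'.1 < p'.2 ∧ p'.2 < α :=
    ⟨(hq.1 p hp).1.trans_le (le_max_left _ _), max_lt (hq.1 p hp).2 hδα⟩
  -- an interval to the right of `p` starts at or above `δ`, by the maximality of `p.1`
  have hsep : ∀ s ∈ (q.I α).erase p, s ≠ p' → s.2 ≤ p'.1 ∨ p'.2 ≤ s.1 := by
    intro s hs _
    obtain ⟨hsp, hs⟩ := Finset.mem_erase.1 hs
    refine (hq.2 s hs p hp hsp).imp_right fun hps => max_le hps (not_lt.1 fun hsδ => ?_)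
    exact (hmax s (Finset.mem_filter.2 ⟨hs, hsδ⟩)).not_gt ((hq.1 p hp).1.trans_le hps)
  have hJ := (hq.mono (Finset.erase_subset p _)).insert hp' hsep
  refine ⟨q.update α (q.hX α hα) _ hJ, IntCond.intExt_update fun s hs => ?_, p.1, hpδ,
    fun q'' hext r hr hrδ => ?_⟩
  · obtain rfl | hsp := eq_or_ne s p
    · exact ⟨p', Finset.mem_insert_self _ _, rfl, le_max_left _ _⟩
    · exact ⟨s, Finset.mem_insert_of_mem (Finset.mem_erase.2 ⟨hsp, hs⟩), rfl, le_rfl⟩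
  · exact hext.fst_le_of_fst_lt_snd (p := p') (by simp) hr (hrδ.trans_le (le_max_right _ _))

lemma IntCond.exists_intExt_mem_I_fst_eq {q : IntCond} {α δ : Ordinal}
    (hα : α < omega2 ∧ α.cof = aleph 1) (hδα : Order.succ δ < α)
    (hhigh : ∀ p ∈ q.I α, δ < p.1) : ∃ q' : IntCond, IntExt q' q ∧ ∃ p ∈ q'.I α, p.1 = δ := by
  classical
  have hJ := (q.isIntervalFamily α).insert (r := (δ, Order.succ δ)) ⟨Order.lt_succ δ, hδα⟩
    fun s hs _ => Or.inr (Order.succ_le_of_lt (hhigh s hs))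
  exact ⟨q.update α hα _ hJ,
    IntCond.intExt_update fun s hs => ⟨s, Finset.mem_insert_of_mem hs, rfl, le_rfl⟩,
    (δ, Order.succ δ), by simp, rfl⟩

lemma IntCond.exists_intExt_decides {α δ : Ordinal} (hα : α < omega2 ∧ α.cof = aleph 1)
    (hδα : δ < α) (q : IntCond) : ∃ q' : IntCond, IntExt q' q ∧
      ((∃ p ∈ q'.I α, p.1 = δ) ∨ ∃ β < δ, ForcesBoundedBelow q' α δ β) := by
  by_cases hδ : ∃ p ∈ q.I α, p.1 = δ
  · exact ⟨q, IntExt.refl q, Or.inl hδ⟩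
  by_cases hlow : ∃ p ∈ q.I α, p.1 < δ
  · obtain ⟨p, hp, hpδ⟩ := hlow
    obtain ⟨q', hq', hbd⟩ := exists_intExt_forcesBoundedBelow (mem_X_of_mem_I hp) hδα ⟨p, hp, hpδ⟩
    exact ⟨q', hq', Or.inr hbd⟩
  push Not at hδ hlow
  have hαlim : Order.IsSuccLimit α :=
    Ordinal.one_lt_cof_iff.1 (hα.2 ▸ one_lt_aleph0.trans_le (aleph0_le_aleph 1))
  obtain ⟨q', hq', hmem⟩ := exists_intExt_mem_I_fst_eq hα (hαlim.succ_lt hδα)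
    fun p hp => (hlow p hp).lt_of_ne' (hδ p hp)
  exact ⟨q', hq', Or.inl hmem⟩

lemma mem_DG_of_forall_exists_mem_DG (G : Set IntCond)
    (hdir : ∀ q₁ ∈ G, ∀ q₂ ∈ G, ∃ q₃ ∈ G, IntExt q₃ q₁ ∧ IntExt q₃ q₂)
    (hgen : ∀ D : Set IntCond, (∀ q : IntCond, ∃ q' ∈ D, IntExt q' q) → (G ∩ D).Nonempty)
    {α δ : Ordinal} (hδα : δ < α) (hδ : Order.IsSuccLimit δ)
    (hcof : ∀ β < δ, ∃ γ ∈ DG G α, β < γ ∧ γ < δ) : δ ∈ DG G α := by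
  obtain ⟨-, ⟨q₀, -, hαq₀, -⟩, -⟩ := hcof 0 hδ.pos
  obtain ⟨q, hqG, hq⟩ := hgen {q | (∃ p ∈ q.I α, p.1 = δ) ∨ ∃ β < δ, ForcesBoundedBelow q α δ β}
    fun q => (IntCond.exists_intExt_decides (q₀.hX α hαq₀) hδα q).imp fun _ h => ⟨h.2, h.1⟩
  rcases hq with ⟨p, hp, hpδ⟩ | ⟨β, hβδ, hbd⟩
  · exact ⟨q, hqG, IntCond.mem_X_of_mem_I hp, p, hp, hpδ⟩
  obtain ⟨γ, ⟨r, hrG, hαr, p, hp, rfl⟩, hβγ, hγδ⟩ := hcof β hβδ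
  obtain ⟨s, -, hsq, hsr⟩ := hdir q hqG r hrG
  obtain ⟨p', hp', hfst, -⟩ := hsr.2 α hαr p hp
  exact absurd (hbd s hsq p' hp' (hfst ▸ hγδ)) (hfst ▸ hβγ.not_ge)

/-- Lemma 2.14: if `q` is a condition, `α ∈ X_q`, and `δ < α` is a limit ordinal which is
not a left endpoint of any interval of `𝒥^q_α` while some interval of `𝒥^q_α` has left
endpoint below `δ`, then some extension `q'` of `q` forces `D^Ġ_α ∩ δ` to be bounded below
`δ`; consequently, for any (sufficiently) generic filter `G`, the set `D^G_α` of decided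
left endpoints is closed in `α`. -/
theorem stmt18 :
    (∀ q : IntCond, ∀ α ∈ q.X, ∀ δ : Ordinal, δ < α → Order.IsSuccLimit δ →
      (∀ p ∈ q.I α, p.1 ≠ δ) → (∃ p ∈ q.I α, p.1 < δ) →
      ∃ q' : IntCond, IntExt q' q ∧ ∃ β < δ,
        ∀ q'' : IntCond, IntExt q'' q' → ∀ p ∈ q''.I α, p.1 < δ → p.1 ≤ β) ∧
    (∀ G : Set IntCond,
      (∀ q₁ ∈ G, ∀ q₂ ∈ G, ∃ q₃ ∈ G, IntExt q₃ q₁ ∧ IntExt q₃ q₂) →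
      (∀ q ∈ G, ∀ r : IntCond, IntExt q r → r ∈ G) →
      (∀ D : Set IntCond, (∀ q : IntCond, ∃ q' ∈ D, IntExt q' q) → (G ∩ D).Nonempty) →
      ∀ α δ : Ordinal, δ < α → Order.IsSuccLimit δ →
        (∀ β < δ, ∃ γ ∈ DG G α, β < γ ∧ γ < δ) → δ ∈ DG G α) :=
  ⟨fun _ _ hα _ hδα _ _ hlow => IntCond.exists_intExt_forcesBoundedBelow hα hδα hlow,
    fun G hdir _ hgen _ _ hδα hδ hcof => mem_DG_of_forall_exists_mem_DG G hdir hgen hδα hδ hcof⟩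
end
end
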